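/- arXiv:2007.04800 — 4 statements merged into one kernel-verified Lean document; each statement's English description precedes it below -/
import Mathlib

section
/- Let Π₁ and Π₂ be policy spaces satisfying policy space independence with respect to a distribution D, and let π* = (g*, f*) be an optimal policy combination maximizing expected reward Y(g(f(x),z)). Define Reg(f) = Y(g(f*(x),z)) − Y(g(f(x),z)) for any fixed g ∈ Π₂, and Reg(g) = Y(g*(f(x),z)) − Y(g(f(x),z)) for any fixed f ∈ Π₁. Then Reg(f) and Reg(g) are well-defined (independent of the choice of the fixed other-player policy), and for all f ∈ Π₁, g ∈ Π₂: Y(π*) − Y(g(f(x),z)) = Reg(g) + Reg(f). -/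
/-- Under policy space independence with optimal pair (g*, f*),
the regrets Reg(f) and Reg(g) are well-defined (independent of the fixed
other-player policy), and the regret decomposes additively. -/
theorem stmt0 {F G : Type*} (Y : G → F → ℝ)
    (hind : ∀ (f₁ f₂ : F) (g₁ g₂ : G), Y g₁ f₁ - Y g₁ f₂ = Y g₂ f₁ - Y g₂ f₂)
    (gs : G) (fs : F) (hopt : ∀ (g : G) (f : F), Y g f ≤ Y gs fs) :
    (∀ (f : F) (g₁ g₂ : G), Y g₁ fs - Y g₁ f = Y g₂ fs - Y g₂ f) ∧
    (∀ (g : G) (f₁ f₂ : F), Y gs f₁ - Y g f₁ = Y gs f₂ - Y g f₂) ∧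
    (∀ (f : F) (g : G),
      Y gs fs - Y g f = (Y gs fs - Y g fs) + (Y gs fs - Y gs f)) := by
  refine ⟨fun f g₁ g₂ => hind fs f g₁ g₂, fun g f₁ f₂ => ?_, fun f g => ?_⟩
  · have := hind f₁ f₂ gs g; linarith
  · have := hind f fs gs g; linarith
end

section
/- Suppose R = A (the machine recommends actions), D : Z → {0,1} is a measurable allocation rule, Π̃₂ is a finite set of functions Z → A, and Π₂ = { g : g(r,z) = if D(z) = 1 then g̃(z) else r, for g̃ ∈ Π̃₂ }. Then for any finite Π₁ ⊆ R^X and any distribution over X × Z × [0,1]^A, the policy spaces Π₁ and Π₂ satisfy policy space independence. -/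
open MeasureTheory

/-- If R = A and Player 2's policies are given by a fixed allocation
rule D : Z → {0,1} (play g̃(z) when D(z)=1, follow the recommendation otherwise),
then any Π₁ and the resulting Π₂ satisfy policy space independence. -/
theorem stmt1 {X Z A : Type*} [MeasurableSpace X] [MeasurableSpace Z]
    (μ : Measure (X × Z × (A → ℝ))) [IsProbabilityMeasure μ]
    (D : Z → Bool)
    (hint : ∀ (f : X → A) (g' : Z → A),
      Integrable (fun p => p.2.2 (if D p.2.1 then g' p.2.1 else f p.1)) μ)
    (f₁ f₂ : X → A) (g₁ g₂ : Z → A) :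
    (∫ p, p.2.2 (if D p.2.1 then g₁ p.2.1 else f₁ p.1) ∂μ) -
      (∫ p, p.2.2 (if D p.2.1 then g₁ p.2.1 else f₂ p.1) ∂μ) =
    (∫ p, p.2.2 (if D p.2.1 then g₂ p.2.1 else f₁ p.1) ∂μ) -
      (∫ p, p.2.2 (if D p.2.1 then g₂ p.2.1 else f₂ p.1) ∂μ) := by
  rw [← integral_sub (hint f₁ g₁) (hint f₂ g₁), ← integral_sub (hint f₁ g₂) (hint f₂ g₂)]
  congr 1 with p
  by_cases h : D p.2.1 <;> simp [h]
end

section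
/- Under policy space independence, if (g*, f*) is an optimal policy combination, then f* maximizes Y(g(f(x),z)) over f ∈ Π₁ for every fixed g ∈ Π₂, and g* maximizes Y(g(f(x),z)) over g ∈ Π₂ for every fixed f ∈ Π₁. -/
/-- Under policy space independence, an optimal pair (g*, f*) is
componentwise optimal: f* maximizes against every fixed g, and g* maximizes
against every fixed f. -/
theorem stmt5 {F G : Type*} (Y : G → F → ℝ)
    (hind : ∀ (f₁ f₂ : F) (g₁ g₂ : G), Y g₁ f₁ - Y g₁ f₂ = Y g₂ f₁ - Y g₂ f₂)
    (gs : G) (fs : F) (hopt : ∀ (g : G) (f : F), Y g f ≤ Y gs fs) :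
    (∀ (g : G) (f : F), Y g f ≤ Y g fs) ∧
    (∀ (f : F) (g : G), Y g f ≤ Y gs f) := by
  constructor
  · intro g f
    have h := hind f fs g gs
    have := hopt gs f
    linarith
  · intro f g
    have h := hind f fs g gs
    have := hopt g fs
    linarith
end

section
/- Under policy space independence, for any choice of indices i_t ∈ {1,…,N₁}, j_t ∈ {1,…,N₂} (t = 1,…,T), and optimal pair (g*, f*), the per-round regret decomposes exactly: Σ_{t=1}^T [Y(g*(f*(x),z)) − Y(g_{j_t}(f_{i_t}(x),z))] = Σ_{t=1}^T [Y(g_{j_t}(f*(x),z)) − Y(g_{j_t}(f_{i_t}(x),z))] + Σ_{t=1}^T [Y(g*(f_{i_t}(x),z)) − Y(g_{j_t}(f_{i_t}(x),z))]. -/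
/-- Under policy space independence, the cumulative regret of any
sequence of chosen policies decomposes exactly into the two players' regrets. -/
theorem stmt16 {F G : Type*} (Y : G → F → ℝ)
    (hind : ∀ (f₁ f₂ : F) (g₁ g₂ : G), Y g₁ f₁ - Y g₁ f₂ = Y g₂ f₁ - Y g₂ f₂)
    (gs : G) (fs : F) (hopt : ∀ (g : G) (f : F), Y g f ≤ Y gs fs)
    (T : ℕ) (i : Fin T → F) (j : Fin T → G) :
    ∑ t, (Y gs fs - Y (j t) (i t)) =
      (∑ t, (Y (j t) fs - Y (j t) (i t))) +
      (∑ t, (Y gs (i t) - Y (j t) (i t))) := by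
  rw [← Finset.sum_add_distrib]
  apply Finset.sum_congr rfl
  intro t _
  have := hind fs (i t) gs (j t)
  linarith
end
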